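/- arXiv:1210.2122 — 12 statements merged into one kernel-verified Lean document; each statement's English description precedes it below -/
import Mathlib

section
/- Let N ≥ 2, α ∈ (0,1), and let q : ZMod N → ℤ be a TDM state. Then for every edge i ∈ ZMod N and every dither value v ∈ (−1/2, 1/2), the vector q' produced by the D³sync update at edge i with dither v is again a TDM state. (TDM states are absorbing states of the D³sync dynamics.) -/
open MeasureTheory

/-- Nearest-integer rounding: `round y = ⌊y + 1/2⌋`. -/
noncomputable def nround (y : ℝ) : ℤ := ⌊y + 1/2⌋

/-- The D³sync update at edge `i` of the cyclic vector `q` with dither `v`: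
`q'_i = q_{i+1} + round((1+α)/2 · (q_i − q_{i+1}) + v)`,
`q'_{i+1} = q_i + q_{i+1} − q'_i`, and `q'_j = q_j` elsewhere. -/
noncomputable def d3update (N : ℕ) (α : ℝ) (q : ZMod N → ℤ) (i : ZMod N) (v : ℝ) :
    ZMod N → ℤ := fun j =>
  if j = i then
    q (i + 1) + nround ((1 + α) / 2 * ((q i : ℝ) - (q (i + 1) : ℝ)) + v)
  else if j = i + 1 then
    q i + q (i + 1) -
      (q (i + 1) + nround ((1 + α) / 2 * ((q i : ℝ) - (q (i + 1) : ℝ)) + v))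
  else q j

/-- A TDM state: all pairwise differences are at most one slot. -/
def isTDM (N : ℕ) (q : ZMod N → ℤ) : Prop := ∀ i j : ZMod N, |q i - q j| ≤ 1

/-- TDM states are absorbing states of the D³sync dynamics. -/
theorem stmt0 (N : ℕ) (hN : 2 ≤ N) (α : ℝ) (hα : α ∈ Set.Ioo (0 : ℝ) 1)
    (q : ZMod N → ℤ) (hq : isTDM N q) (i : ZMod N) (v : ℝ)
    (hv : v ∈ Set.Ioo (-(1 : ℝ) / 2) (1 / 2)) :
    isTDM N (d3update N α q i v) := by
  obtain ⟨hα0, hα1⟩ := hα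
  obtain ⟨hv1, hv2⟩ := hv
  haveI : Fact (1 < N) := ⟨by omega⟩
  have h10 : (1 : ZMod N) ≠ 0 := one_ne_zero
  have hd := abs_le.mp (hq i (i + 1))
  have hkey : nround ((1 + α) / 2 * ((q i : ℝ) - (q (i + 1) : ℝ)) + v) = 0 ∨
      nround ((1 + α) / 2 * ((q i : ℝ) - (q (i + 1) : ℝ)) + v) = q i - q (i + 1) := by
    have hcast : ((q i : ℝ) - (q (i + 1) : ℝ)) = ((q i - q (i + 1) : ℤ) : ℝ) := by
      push_cast; ring
    have hd3 : q i - q (i + 1) = -1 ∨ q i - q (i + 1) = 0 ∨ q i - q (i + 1) = 1 := by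
      omega
    unfold nround
    rcases hd3 with h | h | h <;> rw [hcast, h]
    · have h1 : (-1 : ℤ) ≤ ⌊(1 + α) / 2 * ((-1 : ℤ) : ℝ) + v + 1/2⌋ := by
        apply Int.le_floor.mpr; push_cast; linarith
      have h2 : ⌊(1 + α) / 2 * ((-1 : ℤ) : ℝ) + v + 1/2⌋ < 1 := by
        apply Int.floor_lt.mpr; push_cast; linarith
      omega
    · have : ⌊(1 + α) / 2 * ((0 : ℤ) : ℝ) + v + 1/2⌋ = 0 := by
        apply Int.floor_eq_zero_iff.mpr
        constructor <;> push_cast <;> [linarith; linarith]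
      omega
    · have h1 : (0 : ℤ) ≤ ⌊(1 + α) / 2 * ((1 : ℤ) : ℝ) + v + 1/2⌋ := by
        apply Int.le_floor.mpr; push_cast; linarith
      have h2 : ⌊(1 + α) / 2 * ((1 : ℤ) : ℝ) + v + 1/2⌋ < 2 := by
        apply Int.floor_lt.mpr; push_cast; linarith
      omega
  have hval : ∀ j, ∃ j', d3update N α q i v j = q j' := by
    intro j
    unfold d3update
    by_cases hj : j = i
    · rcases hkey with h | h
      · exact ⟨i + 1, by simp [hj, h, h10]⟩
      · exact ⟨i, by simp [hj, h, h10]; try omega⟩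
    · by_cases hj' : j = i + 1
      · rcases hkey with h | h
        · exact ⟨i, by simp [hj, hj', h, h10]; try omega⟩
        · exact ⟨i + 1, by simp [hj, hj', h, h10]; try omega⟩
      · exact ⟨j, by simp [hj, hj']⟩
  intro j k
  obtain ⟨j', hj'⟩ := hval j
  obtain ⟨k', hk'⟩ := hval k
  rw [hj', hk']
  exact hq j' k'
end

section
/- Let N ≥ 2, α ∈ (0,1), let q : ZMod N → ℤ satisfy q_i ≥ 1 for all i, and let e₀ ∈ ZMod N be any starting edge. Then there exist T ∈ ℕ and a finite sequence of vectors q⁰ = q, q¹, …, q^T : ZMod N → ℤ such that for each 0 ≤ t < T, q^{t+1} is an admissible outcome of q^t at edge e₀ − t (the active edge rotates by one position after each interaction), and q^T is a TDM state. (From any initial state, the D³sync dynamics with rotating active edge reaches a TDM state with positive probability, hence almost surely; the TDM states are the only absorbing states.) -/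
open MeasureTheory

/-- `q'` is an admissible outcome (positive-probability outcome of the dithered update)
of `q` at edge `i`. -/
def admissible (N : ℕ) (α : ℝ) (q : ZMod N → ℤ) (i : ZMod N) (q' : ZMod N → ℤ) : Prop :=
  ∃ r : ℤ,
    (r = ⌊(1 + α) * ((q i : ℝ) - (q (i + 1) : ℝ)) / 2⌋ ∨
      r = ⌈(1 + α) * ((q i : ℝ) - (q (i + 1) : ℝ)) / 2⌉) ∧
    q' i = q (i + 1) + r ∧
    q' (i + 1) = q i + q (i + 1) - q' i ∧
    ∀ j : ZMod N, j ≠ i → j ≠ i + 1 → q' j = q j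

noncomputable def rpol (α : ℝ) (a b : ℤ) : ℤ :=
  if a - b = 0 ∨ a - b = 1 then a - b
  else if b ≤ a then ⌊(1 + α) * ((a : ℝ) - (b : ℝ)) / 2⌋
  else ⌈(1 + α) * ((a : ℝ) - (b : ℝ)) / 2⌉

noncomputable def pstep (N : ℕ) (α : ℝ) (q : ZMod N → ℤ) (i : ZMod N) : ZMod N → ℤ :=
  fun j => if j = i then q (i+1) + rpol α (q i) (q (i+1))
    else if j = i + 1 then q i + q (i+1) - (q (i+1) + rpol α (q i) (q (i+1)))
    else q j

noncomputable def prun (N : ℕ) (α : ℝ) (q : ZMod N → ℤ) (e : ZMod N) : ℕ → ZMod N → ℤ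
  | 0 => q
  | (t+1) => pstep N α (prun N α q e t) (e - (t : ZMod N))

def phi (N : ℕ) [NeZero N] (q : ZMod N → ℤ) : ℤ := ∑ j, (q j)^2

lemma rpol_keep (α : ℝ) (a b : ℤ) (h : a - b = 0 ∨ a - b = 1) : rpol α a b = a - b := by
  rw [rpol, if_pos h]

lemma rpol_zero (α : ℝ) (hα0 : 0 < α) (hα1 : α < 1) (a b : ℤ)
    (h : a - b = 0 ∨ a - b = -1) : rpol α a b = 0 := by
  rcases h with h | h
  · rw [rpol_keep α a b (Or.inl h), h]
  · rw [rpol, if_neg (by omega), if_neg (by omega)]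
    have hab : ((a : ℝ) - b) = -1 := by
      have h2 : ((a : ℝ) - b) = ((a - b : ℤ) : ℝ) := by push_cast; ring
      rw [h2, h]; norm_num
    rw [hab]
    rw [Int.ceil_eq_iff]
    constructor <;> [push_cast; push_cast] <;> nlinarith

lemma rpol_spec (α : ℝ) (hα0 : 0 < α) (hα1 : α < 1) (a b : ℤ) :
    (0 ≤ a - b → 0 ≤ rpol α a b ∧ rpol α a b ≤ a - b) ∧
    (a - b ≤ 0 → a - b ≤ rpol α a b ∧ rpol α a b ≤ 0) ∧
    |2 * rpol α a b - (a - b)| ≤ |a - b| ∧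
    (2 ≤ |a - b| → |2 * rpol α a b - (a - b)| < |a - b|) := by
  have hd : ((a:ℝ) - b) = ((a - b : ℤ) : ℝ) := by push_cast; ring
  obtain h | h | h | h | h : a - b = 0 ∨ a - b = 1 ∨ a - b = -1 ∨ 2 ≤ a - b ∨ a - b ≤ -2 := by
    omega
  · have hr : rpol α a b = 0 := by rw [rpol_keep α a b (Or.inl h), h]
    rw [hr, h]; norm_num
  · have hr : rpol α a b = 1 := by rw [rpol_keep α a b (Or.inr h), h]
    rw [hr, h]; norm_num
  · have hr : rpol α a b = 0 := rpol_zero α hα0 hα1 a b (Or.inr h)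
    rw [hr, h]; norm_num
  · -- d ≥ 2, floor branch
    have hbr : rpol α a b = ⌊(1 + α) * ((a : ℝ) - (b : ℝ)) / 2⌋ := by
      rw [rpol, if_neg (by omega), if_pos (by omega)]
    set r := rpol α a b with hrdef
    have h1 : (r : ℝ) ≤ (1 + α) * ((a : ℝ) - (b : ℝ)) / 2 := hbr ▸ Int.floor_le _
    have h2 : (1 + α) * ((a : ℝ) - (b : ℝ)) / 2 - 1 < (r : ℝ) := hbr ▸ Int.sub_one_lt_floor _
    have hdR : (2 : ℝ) ≤ ((a:ℝ) - b) := by rw [hd]; exact_mod_cast h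
    have hrle : r ≤ a - b := by
      have h3 : (r : ℝ) ≤ ((a - b : ℤ) : ℝ) := by push_cast; nlinarith
      exact_mod_cast h3
    have hrge : 0 ≤ r := by
      have h3 : ((0 : ℤ) : ℝ) ≤ (r : ℝ) := by push_cast; nlinarith
      exact_mod_cast h3
    have hx1 : 2 * r - (a - b) ≤ (a - b) - 1 := by
      have h3 : ((2 * r - (a-b) : ℤ) : ℝ) < ((a - b : ℤ) : ℝ) := by
        push_cast
        nlinarith [mul_pos (by linarith : (0:ℝ) < 1 - α) (by linarith : (0:ℝ) < (a:ℝ) - b)]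
      have h4 : (2 * r - (a - b) : ℤ) < (a - b : ℤ) := by exact_mod_cast h3
      omega
    have hx2 : -1 ≤ 2 * r - (a - b) := by
      have h3 : ((-2 : ℤ) : ℝ) < ((2 * r - (a-b) : ℤ) : ℝ) := by
        push_cast
        nlinarith [mul_pos (by linarith : (0:ℝ) < α) (by linarith : (0:ℝ) < (a:ℝ) - b)]
      have h4 := (by exact_mod_cast h3 : (-2 : ℤ) < 2 * r - (a - b))
      omega
    have habs : |2 * r - (a - b)| ≤ (a - b) - 1 := abs_le.mpr ⟨by omega, hx1⟩
    have habd : |a - b| = a - b := abs_of_nonneg (by omega)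
    exact ⟨fun _ => ⟨hrge, hrle⟩, fun h' => absurd h' (by omega),
      by omega, fun _ => by omega⟩
  · -- d ≤ -2, ceil branch
    have hbr : rpol α a b = ⌈(1 + α) * ((a : ℝ) - (b : ℝ)) / 2⌉ := by
      rw [rpol, if_neg (by omega), if_neg (by omega)]
    set r := rpol α a b with hrdef
    have h1 : (1 + α) * ((a : ℝ) - (b : ℝ)) / 2 ≤ (r : ℝ) := hbr ▸ Int.le_ceil _
    have h2 : (r : ℝ) < (1 + α) * ((a : ℝ) - (b : ℝ)) / 2 + 1 := hbr ▸ Int.ceil_lt_add_one _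
    have hdR : ((a:ℝ) - b) ≤ -2 := by rw [hd]; exact_mod_cast h
    have hrge : a - b ≤ r := by
      have h3 : ((a - b : ℤ) : ℝ) ≤ (r : ℝ) := by
        push_cast
        nlinarith [mul_nonneg (by linarith : (0:ℝ) ≤ 1 - α) (by linarith : (0:ℝ) ≤ -((a:ℝ) - b))]
      exact_mod_cast h3
    have hrle : r ≤ 0 := by
      have h3 : (r : ℝ) < ((1 : ℤ) : ℝ) := by push_cast; nlinarith
      have h4 := (by exact_mod_cast h3 : r < (1 : ℤ)); omega
    have hx1 : (a - b) + 1 ≤ 2 * r - (a - b) := by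
      have h3 : ((a - b : ℤ) : ℝ) < ((2 * r - (a-b) : ℤ) : ℝ) := by
        push_cast
        nlinarith [mul_pos (by linarith : (0:ℝ) < 1 - α) (by linarith : (0:ℝ) < -((a:ℝ) - b))]
      have h4 := (by exact_mod_cast h3 : (a - b : ℤ) < 2 * r - (a - b)); omega
    have hx2 : 2 * r - (a - b) ≤ 1 := by
      have h3 : ((2 * r - (a-b) : ℤ) : ℝ) < ((2 : ℤ) : ℝ) := by
        push_cast
        nlinarith [mul_pos (by linarith : (0:ℝ) < α) (by linarith : (0:ℝ) < -((a:ℝ) - b))]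
      have h4 := (by exact_mod_cast h3 : (2 * r - (a - b) : ℤ) < 2); omega
    have habs : |2 * r - (a - b)| ≤ -(a - b) - 1 := abs_le.mpr ⟨by omega, by omega⟩
    have habd : |a - b| = -(a - b) := abs_of_nonpos (by omega)
    exact ⟨fun h' => absurd h' (by omega), fun _ => ⟨hrge, hrle⟩,
      by omega, fun _ => by omega⟩

lemma rpol_fc (α : ℝ) (hα0 : 0 < α) (hα1 : α < 1) (a b : ℤ) :
    rpol α a b = ⌊(1 + α) * ((a : ℝ) - (b : ℝ)) / 2⌋ ∨
    rpol α a b = ⌈(1 + α) * ((a : ℝ) - (b : ℝ)) / 2⌉ := by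
  have hd : ((a:ℝ) - b) = ((a - b : ℤ) : ℝ) := by push_cast; ring
  rw [rpol]
  split_ifs with h1 h2
  · rcases h1 with h | h
    · left
      rw [h]
      have : ((a:ℝ) - b) = 0 := by rw [hd, h]; norm_num
      rw [this]; simp
    · right
      rw [h]
      have : ((a:ℝ) - b) = 1 := by rw [hd, h]; norm_num
      rw [this]
      rw [eq_comm, Int.ceil_eq_iff] <;> push_cast <;> constructor <;> nlinarith
  · left; rfl
  · right; rfl

lemma add_one_ne {N : ℕ} (hN : 2 ≤ N) (i : ZMod N) : i + 1 ≠ i := by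
  haveI : NeZero N := ⟨by omega⟩
  intro h
  have h1 : (1 : ZMod N) = 0 := by linear_combination h
  have h2 : ((1 : ℕ) : ZMod N).val = 1 := ZMod.val_cast_of_lt (by omega)
  rw [Nat.cast_one, h1, ZMod.val_zero] at h2
  exact absurd h2 (by omega)

lemma zmod_natcast_inj {N : ℕ} [NeZero N] {u k : ℕ} (hu : u < N) (hk : k < N)
    (h : (u : ZMod N) = k) : u = k := by
  have := congrArg ZMod.val h
  rwa [ZMod.val_cast_of_lt hu, ZMod.val_cast_of_lt hk] at this

lemma pstep_apply_i (N : ℕ) (α : ℝ) (q : ZMod N → ℤ) (i : ZMod N) :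
    pstep N α q i i = q (i+1) + rpol α (q i) (q (i+1)) := by simp [pstep]

lemma pstep_apply_i1 {N : ℕ} (hN : 2 ≤ N) (α : ℝ) (q : ZMod N → ℤ) (i : ZMod N) :
    pstep N α q i (i+1) = q i - rpol α (q i) (q (i+1)) := by
  rw [pstep, if_neg (add_one_ne hN i), if_pos rfl]; ring

lemma pstep_apply_other (N : ℕ) (α : ℝ) (q : ZMod N → ℤ) (i j : ZMod N)
    (h1 : j ≠ i) (h2 : j ≠ i + 1) : pstep N α q i j = q j := by
  rw [pstep, if_neg h1, if_neg h2]

lemma pstep_keep (N : ℕ) (α : ℝ) (q : ZMod N → ℤ) (i : ZMod N)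
    (h : q i - q (i+1) = 0 ∨ q i - q (i+1) = 1) : pstep N α q i = q := by
  have hr := rpol_keep α (q i) (q (i+1)) h
  funext j
  rw [pstep]
  split_ifs with h1 h2
  · rw [hr, h1]; ring
  · rw [hr, h2]; ring
  · rfl

lemma pstep_admissible {N : ℕ} (hN : 2 ≤ N) {α : ℝ} (hα0 : 0 < α) (hα1 : α < 1)
    (q : ZMod N → ℤ) (i : ZMod N) : admissible N α q i (pstep N α q i) := by
  refine ⟨rpol α (q i) (q (i+1)), rpol_fc α hα0 hα1 (q i) (q (i+1)),
    pstep_apply_i N α q i, ?_, fun j h1 h2 => pstep_apply_other N α q i j h1 h2⟩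
  rw [pstep_apply_i1 hN, pstep_apply_i]; ring

lemma phi_sub {N : ℕ} [NeZero N] (hN : 2 ≤ N) (q q' : ZMod N → ℤ) (i : ZMod N)
    (hoth : ∀ j, j ≠ i → j ≠ i + 1 → q' j = q j) :
    phi N q' - phi N q = (q' i ^ 2 - q i ^ 2) + (q' (i+1) ^ 2 - q (i+1) ^ 2) := by
  haveI : NeZero N := ⟨by omega⟩
  have hne : i ≠ i + 1 := (add_one_ne hN i).symm
  have h1 : phi N q' - phi N q = ∑ j, (q' j ^ 2 - q j ^ 2) := by
    rw [phi, phi, ← Finset.sum_sub_distrib]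
  rw [h1]
  have h2 : ∑ j ∈ ({i, i+1} : Finset (ZMod N)), (q' j ^ 2 - q j ^ 2)
      = ∑ j, (q' j ^ 2 - q j ^ 2) := by
    apply Finset.sum_subset (Finset.subset_univ _)
    intro x _ hx
    simp only [Finset.mem_insert, Finset.mem_singleton, not_or] at hx
    rw [hoth x hx.1 hx.2]; ring
  rw [← h2, Finset.sum_pair hne]

lemma phi_step_le {N : ℕ} [NeZero N] (hN : 2 ≤ N) {α : ℝ} (hα0 : 0 < α) (hα1 : α < 1)
    (q : ZMod N → ℤ) (i : ZMod N) : phi N (pstep N α q i) ≤ phi N q := by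
  have hsub := phi_sub hN q (pstep N α q i) i (pstep_apply_other N α q i)
  rw [pstep_apply_i, pstep_apply_i1 hN] at hsub
  set r := rpol α (q i) (q (i+1)) with hr
  have habs := (rpol_spec α hα0 hα1 (q i) (q (i+1))).2.2.1
  rw [← hr] at habs
  have hb := abs_le.mp habs
  have hsq : (2 * r - (q i - q (i+1)))^2 ≤ (q i - q (i+1))^2 := by
    nlinarith [abs_nonneg (2 * r - (q i - q (i+1))), sq_abs (2 * r - (q i - q (i+1))),
      sq_abs (q i - q (i+1)), abs_nonneg (q i - q (i+1))]
  have hid : 2*((q (i+1) + r)^2 - q i^2 + ((q i - r)^2 - q (i+1)^2))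
      = (2*r - (q i - q (i+1)))^2 - (q i - q (i+1))^2 := by ring
  linarith [hsub, hsq, hid]

lemma phi_step_lt {N : ℕ} [NeZero N] (hN : 2 ≤ N) {α : ℝ} (hα0 : 0 < α) (hα1 : α < 1)
    (q : ZMod N → ℤ) (i : ZMod N) (hd : 2 ≤ |q i - q (i+1)|) :
    phi N (pstep N α q i) < phi N q := by
  have hsub := phi_sub hN q (pstep N α q i) i (pstep_apply_other N α q i)
  rw [pstep_apply_i, pstep_apply_i1 hN] at hsub
  set r := rpol α (q i) (q (i+1)) with hr
  have habs := (rpol_spec α hα0 hα1 (q i) (q (i+1))).2.2.2 hd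
  rw [← hr] at habs
  have hsq : (2 * r - (q i - q (i+1)))^2 < (q i - q (i+1))^2 := by
    have h1 : |2 * r - (q i - q (i+1))|^2 < |q i - q (i+1)|^2 :=
      pow_lt_pow_left₀ habs (abs_nonneg _) (by norm_num)
    rwa [sq_abs, sq_abs] at h1
  have hid : 2*((q (i+1) + r)^2 - q i^2 + ((q i - r)^2 - q (i+1)^2))
      = (2*r - (q i - q (i+1)))^2 - (q i - q (i+1))^2 := by ring
  linarith [hsub, hsq, hid]

lemma pstep_le_max {N : ℕ} (hN : 2 ≤ N) {α : ℝ} (hα0 : 0 < α) (hα1 : α < 1)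
    (q : ZMod N → ℤ) (i : ZMod N) (M : ℤ) (h : ∀ j, q j ≤ M) :
    ∀ j, pstep N α q i j ≤ M := by
  intro j
  have hs := rpol_spec α hα0 hα1 (q i) (q (i+1))
  by_cases h1 : j = i
  · rw [h1, pstep_apply_i]
    rcases le_or_gt 0 (q i - q (i+1)) with hc | hc
    · have := hs.1 hc
      have := h i
      omega
    · have := hs.2.1 (by omega)
      have := h (i+1)
      omega
  · by_cases h2 : j = i + 1
    · rw [h2, pstep_apply_i1 hN]
      rcases le_or_gt 0 (q i - q (i+1)) with hc | hc
      · have := hs.1 hc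
        have := h i
        omega
      · have := hs.2.1 (by omega)
        have := h (i+1)
        omega
    · rw [pstep_apply_other N α q i j h1 h2]; exact h j

lemma pstep_swap {N : ℕ} (hN : 2 ≤ N) {α : ℝ} (hα0 : 0 < α) (hα1 : α < 1)
    (q : ZMod N → ℤ) (i : ZMod N) (h : q i - q (i+1) = -1) :
    pstep N α q i i = q (i+1) ∧ pstep N α q i (i+1) = q i := by
  have hr := rpol_zero α hα0 hα1 (q i) (q (i+1)) (Or.inr h)
  rw [pstep_apply_i, pstep_apply_i1 hN, hr]
  omega

@[simp] lemma prun_zero (N : ℕ) (α : ℝ) (q : ZMod N → ℤ) (e : ZMod N) :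
    prun N α q e 0 = q := rfl

lemma prun_succ (N : ℕ) (α : ℝ) (q : ZMod N → ℤ) (e : ZMod N) (t : ℕ) :
    prun N α q e (t+1) = pstep N α (prun N α q e t) (e - (t : ZMod N)) := rfl

lemma prun_add (N : ℕ) (α : ℝ) (q : ZMod N → ℤ) (e : ZMod N) (T s : ℕ) :
    prun N α q e (T + s) = prun N α (prun N α q e T) (e - (T : ZMod N)) s := by
  induction s with
  | zero => rfl
  | succ s ih =>
    have he : e - ((T + s : ℕ) : ZMod N) = (e - (T : ZMod N)) - ((s : ℕ) : ZMod N) := by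
      push_cast; ring
    rw [show T + (s+1) = (T + s) + 1 from rfl, prun_succ, prun_succ, ih, he]

lemma dec {N : ℕ} (hN : 2 ≤ N) {α : ℝ} (hα0 : 0 < α) (hα1 : α < 1)
    (q : ZMod N → ℤ) (e : ZMod N) (hq : ¬ isTDM N q) :
    haveI : NeZero N := ⟨by omega⟩
    ∃ T, phi N (prun N α q e T) < phi N q := by
  haveI : NeZero N := ⟨by omega⟩
  by_contra hcon
  push_neg at hcon
  -- phi is constant along the run
  have hmono : ∀ t, phi N (prun N α q e t) ≤ phi N q := by
    intro t
    induction t with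
    | zero => exact le_refl _
    | succ t ih => exact le_trans (phi_step_le hN hα0 hα1 _ _) ih
  have hconst : ∀ t, phi N (prun N α q e t) = phi N q :=
    fun t => le_antisymm (hmono t) (hcon t)
  -- classification of each step: the active difference is in [-1, 1]
  have hclass : ∀ t, -1 ≤ prun N α q e t (e - (t : ZMod N)) -
      prun N α q e t (e - (t : ZMod N) + 1) ∧
      prun N α q e t (e - (t : ZMod N)) - prun N α q e t (e - (t : ZMod N) + 1) ≤ 1 := by
    intro t
    by_contra hd
    have habs : 2 ≤ |prun N α q e t (e - (t : ZMod N)) -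
        prun N α q e t (e - (t : ZMod N) + 1)| := by
      rcases abs_cases (prun N α q e t (e - (t : ZMod N)) -
        prun N α q e t (e - (t : ZMod N) + 1)) with ⟨h1, h2⟩ | ⟨h1, h2⟩ <;> omega
    have := phi_step_lt hN hα0 hα1 (prun N α q e t) (e - (t : ZMod N)) habs
    rw [← prun_succ, hconst t, hconst (t+1)] at this
    exact lt_irrefl _ this
  -- maximum
  obtain ⟨m, -, hm⟩ := Finset.exists_max_image Finset.univ q Finset.univ_nonempty
  set M := q m with hM
  have hmle : ∀ j, q j ≤ M := fun j => hm j (Finset.mem_univ j)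
  have hbound : ∀ t j, prun N α q e t j ≤ M := by
    intro t
    induction t with
    | zero => exact hmle
    | succ t ih => exact pstep_le_max hN hα0 hα1 _ _ M ih
  -- a small value persists
  have hsmall : ∀ t, ∃ p, prun N α q e t p ≤ M - 2 := by
    intro t
    induction t with
    | zero =>
      rw [isTDM] at hq
      push_neg at hq
      obtain ⟨i, j, hij⟩ := hq
      rcases abs_cases (q i - q j) with ⟨h1, h2⟩ | ⟨h1, h2⟩
      · exact ⟨j, by simp only [prun_zero]; rw [h1] at hij; have := hmle i; omega⟩
      · exact ⟨i, by simp only [prun_zero]; rw [h1] at hij; have := hmle j; omega⟩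
    | succ t ih =>
      obtain ⟨p, hp⟩ := ih
      obtain ⟨hc1, hc2⟩ := hclass t
      set i := e - (t : ZMod N) with hi
      rw [prun_succ]
      rcases (by omega : prun N α q e t i - prun N α q e t (i+1) = -1 ∨
          (prun N α q e t i - prun N α q e t (i+1) = 0 ∨
           prun N α q e t i - prun N α q e t (i+1) = 1)) with hc | hc
      · obtain ⟨hs1, hs2⟩ := pstep_swap hN hα0 hα1 (prun N α q e t) i hc
        by_cases hp1 : p = i
        · exact ⟨i + 1, by rw [hs2, ← hp1]; exact hp⟩
        · by_cases hp2 : p = i + 1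
          · exact ⟨i, by rw [hs1, ← hp2]; exact hp⟩
          · exact ⟨p, by rw [pstep_apply_other N α _ i p hp1 hp2]; exact hp⟩
      · rw [pstep_keep N α _ i hc]
        exact ⟨p, hp⟩
  -- the time when the active pair's right endpoint is the initial maximum position
  set t0 := (e + 1 - m).val with ht0
  have ht0N : t0 < N := ZMod.val_lt _
  have ht0cast : ((t0 : ℕ) : ZMod N) = e + 1 - m := ZMod.natCast_rightInverse _
  have hmeq : m = e - ((t0 : ℕ) : ZMod N) + 1 := by rw [ht0cast]; ring
  -- the maximum position is untouched before time t0
  have hC1 : ∀ u, u < t0 → prun N α q e u m = M := by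
    intro u hu
    induction u with
    | zero => rfl
    | succ u ih =>
      have hu' : u < t0 := by omega
      rw [prun_succ, pstep_apply_other, ih hu']
      · intro h
        have h2 : ((u : ℕ) : ZMod N) = ((t0 - 1 : ℕ) : ZMod N) := by
          have hc : ((t0 - 1 : ℕ) : ZMod N) = ((t0 : ℕ) : ZMod N) - 1 := by
            push_cast [Nat.cast_sub (by omega : 1 ≤ t0)]; ring
          rw [hc]
          linear_combination h - hmeq
        have := zmod_natcast_inj (by omega) (by omega) h2
        omega
      · intro h
        have h2 : ((u : ℕ) : ZMod N) = ((t0 : ℕ) : ZMod N) := by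
          linear_combination h - hmeq
        have := zmod_natcast_inj (by omega) (by omega) h2
        omega
  -- at time t0 the maximum is at position m = e - t0 + 1
  have hC2 : prun N α q e t0 m = M := by
    rcases Nat.eq_zero_or_pos t0 with h0 | h0
    · rw [h0]; rfl
    · have hu : t0 = (t0 - 1) + 1 := by omega
      have hprev : prun N α q e (t0 - 1) m = M := hC1 _ (by omega)
      have hedge : e - (((t0 - 1 : ℕ)) : ZMod N) = m := by
        push_cast [Nat.cast_sub (by omega : 1 ≤ t0)]
        rw [hmeq]; push_cast; ring
      obtain ⟨hc1, hc2⟩ := hclass (t0 - 1)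
      rw [hedge] at hc1 hc2
      have hble := hbound (t0 - 1) (m + 1)
      rw [hu, prun_succ, hedge, pstep_apply_i,
        rpol_keep α _ _ (by rw [hprev] at hc1 hc2 ⊢; omega), hprev]
      omega
  -- the carried maximum: invariant along the sweep
  have hC3 : ∀ s, prun N α q e (t0 + s) (e - ((t0 + s : ℕ) : ZMod N) + 1) = M := by
    intro s
    induction s with
    | zero => rw [Nat.add_zero, ← hmeq]; exact hC2
    | succ s ih =>
      have hedge : e - (((t0 + s + 1 : ℕ)) : ZMod N) + 1 = e - ((t0 + s : ℕ) : ZMod N) := by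
        push_cast; ring
      rw [show t0 + (s+1) = (t0 + s) + 1 from rfl, prun_succ, hedge, pstep_apply_i, ih]
      obtain ⟨hc1, hc2⟩ := hclass (t0 + s)
      rw [ih] at hc1 hc2
      have hble := hbound (t0 + s) (e - ((t0 + s : ℕ) : ZMod N))
      rw [rpol_zero α hα0 hα1 _ _ (by omega)]
      omega
  -- the low position
  obtain ⟨p, hp⟩ := hsmall t0
  have hpm : p ≠ m := by
    intro h
    rw [h, hC2] at hp
    omega
  set k := (e - ((t0 : ℕ) : ZMod N) - p).val with hk
  have hkN : k < N := ZMod.val_lt _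
  have hkcast : ((k : ℕ) : ZMod N) = e - ((t0 : ℕ) : ZMod N) - p := ZMod.natCast_rightInverse _
  have hkne : k ≠ N - 1 := by
    intro h
    apply hpm
    have hc : ((k : ℕ) : ZMod N) = -1 := by
      rw [h]
      push_cast [Nat.cast_sub (by omega : 1 ≤ N)]
      simp [ZMod.natCast_self]
    rw [hc] at hkcast
    rw [hmeq]
    linear_combination hkcast
  -- the low position is untouched between t0 and t0 + k
  have hC5 : ∀ u, u ≤ k → prun N α q e (t0 + u) p = prun N α q e t0 p := by
    intro u hu
    induction u with
    | zero => rfl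
    | succ u ih =>
      rw [show t0 + (u+1) = (t0 + u) + 1 from rfl, prun_succ, pstep_apply_other, ih (by omega)]
      · intro h
        have h2 : ((u : ℕ) : ZMod N) = ((k : ℕ) : ZMod N) := by
          push_cast at h ⊢
          linear_combination h - hkcast
        have := zmod_natcast_inj (by omega) hkN h2
        omega
      · intro h
        have h2 : ((u : ℕ) : ZMod N) = ((k + 1 : ℕ) : ZMod N) := by
          push_cast at h ⊢
          linear_combination h - hkcast
        have := zmod_natcast_inj (by omega) (by omega) h2
        omega
  -- contradiction at time t0 + k
  have hfin1 : prun N α q e (t0 + k) p ≤ M - 2 := by rw [hC5 k le_rfl]; exact hp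
  have hfin2 := hC3 k
  have hedge : e - ((t0 + k : ℕ) : ZMod N) = p := by
    push_cast
    push_cast at hkcast
    linear_combination -hkcast
  obtain ⟨hc1, hc2⟩ := hclass (t0 + k)
  rw [hedge] at hc1 hc2 hfin2
  omega

lemma phi_nonneg {N : ℕ} [NeZero N] (q : ZMod N → ℤ) : 0 ≤ phi N q :=
  Finset.sum_nonneg fun j _ => sq_nonneg (q j)

lemma main_aux {N : ℕ} (hN : 2 ≤ N) {α : ℝ} (hα0 : 0 < α) (hα1 : α < 1) :
    haveI : NeZero N := ⟨by omega⟩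
    ∀ (n : ℕ) (q : ZMod N → ℤ) (e : ZMod N), (phi N q).toNat ≤ n →
      ∃ T, isTDM N (prun N α q e T) := by
  haveI : NeZero N := ⟨by omega⟩
  intro n
  induction n using Nat.strong_induction_on with
  | _ n ih =>
    intro q e hn
    by_cases hq : isTDM N q
    · exact ⟨0, hq⟩
    · obtain ⟨T₁, hT₁⟩ := dec hN hα0 hα1 q e hq
      have hpos : 0 < phi N q := lt_of_le_of_lt (phi_nonneg _) hT₁
      have hlt : (phi N (prun N α q e T₁)).toNat < n :=
        lt_of_lt_of_le ((Int.toNat_lt_toNat hpos).mpr hT₁) hn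
      obtain ⟨T₂, hT₂⟩ := ih _ hlt (prun N α q e T₁) (e - (T₁ : ZMod N)) le_rfl
      exact ⟨T₁ + T₂, by rw [prun_add]; exact hT₂⟩

/-- From any initial state, the D³sync dynamics with rotating active edge can reach a
TDM state by a finite sequence of admissible interactions. -/
theorem stmt1 (N : ℕ) (hN : 2 ≤ N) (α : ℝ) (hα : α ∈ Set.Ioo (0 : ℝ) 1)
    (q : ZMod N → ℤ) (hq : ∀ i, 1 ≤ q i) (e₀ : ZMod N) :
    ∃ (T : ℕ) (Q : ℕ → ZMod N → ℤ), Q 0 = q ∧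
      (∀ t, t < T → admissible N α (Q t) (e₀ - (t : ZMod N)) (Q (t + 1))) ∧
      isTDM N (Q T) := by
  haveI : NeZero N := ⟨by omega⟩
  obtain ⟨hα0, hα1⟩ := hα
  obtain ⟨T, hT⟩ := main_aux hN hα0 hα1 (phi N q).toNat q e₀ le_rfl
  exact ⟨T, prun N α q e₀, rfl,
    fun t _ => by rw [prun_succ]; exact pstep_admissible hN hα0 hα1 _ _, hT⟩
end

section
/- Let α ∈ (0,1) and consider the D³sync update in which the dithered quantizer is replaced by the deterministic uniform quantizer, i.e., at edge i the new value is q'_i = q_{i+1} + round((1+α)/2·(q_i − q_{i+1})) with q'_{i+1} = q_i + q_{i+1} − q'_i. Then: (a) whenever |q_i − q_{i+1}| = 1 the update is null, i.e., q' = q; and (b) consequently, on a ring of N = 4 nodes the vector q = (1, 2, 3, 2) is a fixed point of the uniformly quantized update at every edge, yet it is not a TDM state. (With uniform quantization the algorithm can converge to a non-TDM state.) -/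
/-- The D³sync update at edge `i` with the deterministic uniform quantizer (no dither):
`q'_i = q_{i+1} + round((1+α)/2 · (q_i − q_{i+1}))`, `q'_{i+1} = q_i + q_{i+1} − q'_i`,
and `q'_j = q_j` elsewhere. -/
noncomputable def u3update (N : ℕ) (α : ℝ) (q : ZMod N → ℤ) (i : ZMod N) :
    ZMod N → ℤ := fun j =>
  if j = i then
    q (i + 1) + nround ((1 + α) / 2 * ((q i : ℝ) - (q (i + 1) : ℝ)))
  else if j = i + 1 then
    q i + q (i + 1) - (q (i + 1) + nround ((1 + α) / 2 * ((q i : ℝ) - (q (i + 1) : ℝ))))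
  else q j

lemma nround_pos (α : ℝ) (hα : α ∈ Set.Ioo (0 : ℝ) 1) :
    nround ((1 + α) / 2 * 1) = 1 := by
  obtain ⟨h0, h1⟩ := hα
  unfold nround
  rw [Int.floor_eq_iff]
  constructor <;> push_cast <;> nlinarith

lemma nround_neg (α : ℝ) (hα : α ∈ Set.Ioo (0 : ℝ) 1) :
    nround ((1 + α) / 2 * (-1)) = -1 := by
  obtain ⟨h0, h1⟩ := hα
  unfold nround
  rw [Int.floor_eq_iff]
  constructor <;> push_cast <;> nlinarith

lemma parta (α : ℝ) (hα : α ∈ Set.Ioo (0 : ℝ) 1) :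
    ∀ (N : ℕ), 2 ≤ N → ∀ (q : ZMod N → ℤ) (i : ZMod N),
        |q i - q (i + 1)| = 1 → u3update N α q i = q := by
  intro N _ q i hd
  rcases abs_eq (by norm_num : (0:ℤ) ≤ 1) |>.mp hd with h | h
  · have hc : (q i : ℝ) - (q (i + 1) : ℝ) = 1 := by exact_mod_cast congrArg (Int.cast (R := ℝ)) h
    funext j
    unfold u3update
    rw [hc, nround_pos α hα]
    split_ifs with h1 h2 <;> [skip; skip; rfl] <;> subst_vars <;> omega
  · have hc : (q i : ℝ) - (q (i + 1) : ℝ) = -1 := by exact_mod_cast congrArg (Int.cast (R := ℝ)) h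
    funext j
    unfold u3update
    rw [hc, nround_neg α hα]
    split_ifs with h1 h2 <;> [skip; skip; rfl] <;> subst_vars <;> omega

/-- With the uniform (undithered) quantizer: (a) an active pair differing by exactly one
slot is left unchanged; (b) consequently on a ring of 4 nodes the vector `(1, 2, 3, 2)`
is a fixed point of the update at every edge, yet it is not a TDM state. -/
theorem stmt4 (α : ℝ) (hα : α ∈ Set.Ioo (0 : ℝ) 1) :
    (∀ (N : ℕ), 2 ≤ N → ∀ (q : ZMod N → ℤ) (i : ZMod N),
        |q i - q (i + 1)| = 1 → u3update N α q i = q) ∧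
    (∀ i : ZMod 4,
        u3update 4 α (fun j => if j = 0 then 1 else if j = 1 then 2
          else if j = 2 then 3 else 2) i =
        (fun j => if j = 0 then 1 else if j = 1 then 2 else if j = 2 then 3 else 2)) ∧
    ¬ isTDM 4 (fun j => if j = 0 then 1 else if j = 1 then 2
        else if j = 2 then 3 else 2) := by
  refine ⟨parta α hα, ?_, ?_⟩
  · intro i
    apply parta α hα 4 (by norm_num)
    fin_cases i <;> decide
  · intro h
    have := h 0 2
    revert this
    decide
end

section
/- Let N ≥ 2, α ∈ (0,1), and let q : ZMod N → ℤ with |q_i − q_{i+1}| = 1 for some edge i. Then for every dither value v ∈ (−1/2, 1/2), the D³sync update at edge i with dither v either leaves the pair unchanged (q'_i = q_i, q'_{i+1} = q_{i+1}) or swaps it (q'_i = q_{i+1}, q'_{i+1} = q_i); in particular |q'_i − q'_{i+1}| = 1. -/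
open MeasureTheory

/-- If the active nodes' values differ by exactly one slot, the D³sync update either
leaves the pair unchanged or swaps it; in particular the difference stays one. -/
theorem stmt6 (N : ℕ) (hN : 2 ≤ N) (α : ℝ) (hα : α ∈ Set.Ioo (0 : ℝ) 1)
    (q : ZMod N → ℤ) (i : ZMod N) (hdiff : |q i - q (i + 1)| = 1) (v : ℝ)
    (hv : v ∈ Set.Ioo (-(1 : ℝ) / 2) (1 / 2)) :
    ((d3update N α q i v i = q i ∧ d3update N α q i v (i + 1) = q (i + 1)) ∨
      (d3update N α q i v i = q (i + 1) ∧ d3update N α q i v (i + 1) = q i)) ∧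
    |d3update N α q i v i - d3update N α q i v (i + 1)| = 1 := by
  haveI : Fact (1 < N) := ⟨hN⟩
  have hne : (i + 1 : ZMod N) ≠ i := by
    intro h
    have : (1 : ZMod N) = 0 := by
      have := congrArg (fun x => x - i) h
      simp at this
    exact one_ne_zero this
  obtain ⟨hα0, hα1⟩ := hα
  obtain ⟨hv0, hv1⟩ := hv
  set r : ℤ := nround ((1 + α) / 2 * ((q i : ℝ) - (q (i + 1) : ℝ)) + v) with hr
  have hqi : d3update N α q i v i = q (i + 1) + r := by
    simp [d3update, hr]
  have hqi1 : d3update N α q i v (i + 1) = q i + q (i + 1) - (q (i + 1) + r) := by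
    simp [d3update, hne, hr]
  rcases abs_eq (by norm_num : (0:ℤ) ≤ 1) |>.mp hdiff with hd | hd
  · -- q i - q (i+1) = 1
    have hcast : ((q i : ℝ) - (q (i + 1) : ℝ)) = 1 := by
      have := congrArg (fun z : ℤ => (z : ℝ)) hd
      push_cast at this
      linarith [this]
    have hx : (1 + α) / 2 * ((q i : ℝ) - (q (i + 1) : ℝ)) + v + 1/2
        = (1 + α) / 2 + v + 1/2 := by rw [hcast]; ring
    have hr0 : 0 ≤ r := by
      rw [hr, nround, Int.le_floor]
      rw [hx]; push_cast; linarith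
    have hr1 : r ≤ 1 := by
      have : r < 2 := by
        rw [hr, nround, Int.floor_lt]
        rw [hx]; push_cast; linarith
      omega
    interval_cases r
    · constructor
      · right
        constructor
        · rw [hqi]; ring
        · rw [hqi1]; ring
      · rw [hqi, hqi1]
        have : q (i + 1) + 0 - (q i + q (i + 1) - (q (i + 1) + 0)) = -(q i - q (i+1)) := by ring
        rw [this, abs_neg, hdiff]
    · constructor
      · left
        constructor
        · rw [hqi]; omega
        · rw [hqi1]; omega
      · rw [hqi, hqi1]
        have : q (i + 1) + 1 - (q i + q (i + 1) - (q (i + 1) + 1)) = 2 - (q i - q (i+1)) := by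
          ring
        rw [this, hd]; norm_num
  · -- q i - q (i+1) = -1
    have hcast : ((q i : ℝ) - (q (i + 1) : ℝ)) = -1 := by
      have := congrArg (fun z : ℤ => (z : ℝ)) hd
      push_cast at this
      linarith [this]
    have hx : (1 + α) / 2 * ((q i : ℝ) - (q (i + 1) : ℝ)) + v + 1/2
        = -((1 + α) / 2) + v + 1/2 := by rw [hcast]; ring
    have hr0 : -1 ≤ r := by
      rw [hr, nround, Int.le_floor]
      rw [hx]; push_cast; linarith
    have hr1 : r ≤ 0 := by
      have : r < 1 := by
        rw [hr, nround, Int.floor_lt]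
        rw [hx]; push_cast; linarith
      omega
    interval_cases r
    · constructor
      · left
        constructor
        · rw [hqi]; omega
        · rw [hqi1]; omega
      · rw [hqi, hqi1]
        have : q (i + 1) + (-1) - (q i + q (i + 1) - (q (i + 1) + (-1))) = -2 - (q i - q (i+1)) := by
          ring
        rw [this, hd]; norm_num
    · constructor
      · right
        constructor
        · rw [hqi]; ring
        · rw [hqi1]; ring
      · rw [hqi, hqi1]
        have : q (i + 1) + 0 - (q i + q (i + 1) - (q (i + 1) + 0)) = -(q i - q (i+1)) := by ring
        rw [this, abs_neg, hdiff]
end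

section
/- Let N ≥ 2, α ∈ (0,1), and let q : ZMod N → ℤ. If q_i − q_{i+1} ≥ 2 at edge i, then for every dither value v ∈ (−1/2, 1/2) the D³sync update at edge i with dither v satisfies q'_i ≤ q_i and q'_{i+1} ≥ q_{i+1}; symmetrically, if q_{i+1} − q_i ≥ 2, then q'_i ≥ q_i and q'_{i+1} ≤ q_{i+1}. -/
open MeasureTheory

/-
The update sets `q'_i = q_{i+1} + round((1+α)/2 · d + v)` with `d = q_i − q_{i+1}` and keeps
`q'_i + q'_{i+1} = q_i + q_{i+1}`. Since `(1+α)/2 ≤ 1` and `|v| < 1/2`, the rounded amount is at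
most `d` when `d ≥ 0` and at least `d` when `d ≤ 0`, which gives both inequalities. A gap of
two forces `i + 1 ≠ i`, so the two updated coordinates are distinct.
-/
theorem nround_mul_add_le_of_nonneg {c v : ℝ} {d : ℤ} (hc : c ≤ 1) (hd : 0 ≤ d) (hv : v < 1 / 2) :
    nround (c * d + v) ≤ d := by
  have hd' : (0 : ℝ) ≤ d := by exact_mod_cast hd
  rw [nround, Int.floor_le_iff]
  nlinarith

theorem le_nround_mul_add_of_nonpos {c v : ℝ} {d : ℤ} (hc : c ≤ 1) (hd : d ≤ 0)
    (hv : -(1 : ℝ) / 2 < v) : d ≤ nround (c * d + v) := by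
  have hd' : (d : ℝ) ≤ 0 := by exact_mod_cast hd
  rw [nround, Int.le_floor]
  nlinarith

section D3update

variable {N : ℕ} {α v : ℝ} {q : ZMod N → ℤ} {i : ZMod N}

theorem d3update_self :
    d3update N α q i v i = q (i + 1) + nround ((1 + α) / 2 * ((q i - q (i + 1) : ℤ) : ℝ) + v) := by
  simp [d3update]

theorem d3update_succ (h : i + 1 ≠ i) :
    d3update N α q i v (i + 1) = q i - nround ((1 + α) / 2 * ((q i - q (i + 1) : ℤ) : ℝ) + v) := by
  simp only [d3update, h, if_false, if_true, Int.cast_sub]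
  ring

end D3update

theorem stmt7_general (N : ℕ) (α : ℝ) (hα : α ∈ Set.Ioo (0 : ℝ) 1)
    (q : ZMod N → ℤ) (i : ZMod N) (v : ℝ)
    (hv : v ∈ Set.Ioo (-(1 : ℝ) / 2) (1 / 2)) :
    (2 ≤ q i - q (i + 1) →
      d3update N α q i v i ≤ q i ∧ q (i + 1) ≤ d3update N α q i v (i + 1)) ∧
    (2 ≤ q (i + 1) - q i →
      q i ≤ d3update N α q i v i ∧ d3update N α q i v (i + 1) ≤ q (i + 1)) := by
  have hc : (1 + α) / 2 ≤ 1 := by linarith [hα.2]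
  have hsucc_ne (hgap : q i ≠ q (i + 1)) : i + 1 ≠ i := fun h => hgap (by rw [h])
  refine ⟨fun hgap => ?_, fun hgap => ?_⟩
  · have hr := nround_mul_add_le_of_nonneg hc (by omega : 0 ≤ q i - q (i + 1)) hv.2
    rw [d3update_self, d3update_succ (hsucc_ne (by omega))]
    omega
  · have hr := le_nround_mul_add_of_nonpos hc (by omega : q i - q (i + 1) ≤ 0) hv.1
    rw [d3update_self, d3update_succ (hsucc_ne (by omega))]
    omega

/-- If the active nodes' values differ by at least two slots, the larger value does not
increase and the smaller value does not decrease under the D³sync update. -/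
theorem stmt7 (N : ℕ) (hN : 2 ≤ N) (α : ℝ) (hα : α ∈ Set.Ioo (0 : ℝ) 1)
    (q : ZMod N → ℤ) (i : ZMod N) (v : ℝ)
    (hv : v ∈ Set.Ioo (-(1 : ℝ) / 2) (1 / 2)) :
    (2 ≤ q i - q (i + 1) →
      d3update N α q i v i ≤ q i ∧ q (i + 1) ≤ d3update N α q i v (i + 1)) ∧
    (2 ≤ q (i + 1) - q i →
      q i ≤ d3update N α q i v i ∧ d3update N α q i v (i + 1) ≤ q (i + 1)) :=
  stmt7_general N α hα q i v hv
end

section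
/- Let N ≥ 2, α ∈ (0,1), and let q : ZMod N → ℤ. Then for every edge i and every dither value v ∈ (−1/2, 1/2), the D³sync update at edge i with dither v satisfies |q'_i − q'_{i+1}| ≤ |q_i − q_{i+1}|. -/
open MeasureTheory

/-- The D³sync update never increases the gap between the active nodes' values. -/
theorem stmt8 (N : ℕ) (hN : 2 ≤ N) (α : ℝ) (hα : α ∈ Set.Ioo (0 : ℝ) 1)
    (q : ZMod N → ℤ) (i : ZMod N) (v : ℝ)
    (hv : v ∈ Set.Ioo (-(1 : ℝ) / 2) (1 / 2)) :
    |d3update N α q i v i - d3update N α q i v (i + 1)| ≤ |q i - q (i + 1)| := by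
  obtain ⟨hv1, hv2⟩ := hv
  obtain ⟨hα1, hα2⟩ := hα
  haveI : Fact (1 < N) := ⟨hN⟩
  have hne : (i + 1 : ZMod N) ≠ i := by
    intro h
    have h1 : (1 : ZMod N) = 0 := by
      have := congrArg (fun x => x - i) h
      simpa using this
    exact one_ne_zero h1
  set d : ℤ := q i - q (i + 1) with hd
  set r : ℤ := nround ((1 + α) / 2 * ((q i : ℝ) - (q (i + 1) : ℝ)) + v) with hr
  have hx : r = ⌊(1 + α) / 2 * (d : ℝ) + v + 1/2⌋ := by
    simp [hr, nround, hd]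
  have key : (0 ≤ r ∧ r ≤ d) ∨ (d ≤ r ∧ r ≤ 0) := by
    rcases le_or_gt 0 d with hd0 | hd0
    · left
      have hdr : (0 : ℝ) ≤ (d : ℝ) := by exact_mod_cast hd0
      constructor
      · rw [hx, Int.le_floor]
        push_cast
        nlinarith
      · rw [hx]
        have : ⌊(1 + α) / 2 * (d : ℝ) + v + 1/2⌋ < d + 1 := by
          rw [Int.floor_lt]
          push_cast
          nlinarith
        omega
    · right
      have hdr : (d : ℝ) ≤ 0 := by exact_mod_cast hd0.le
      constructor
      · rw [hx, Int.le_floor]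
        push_cast
        nlinarith
      · rw [hx]
        have : ⌊(1 + α) / 2 * (d : ℝ) + v + 1/2⌋ < 0 + 1 := by
          rw [Int.floor_lt]
          push_cast
          nlinarith
        omega
  have heq : d3update N α q i v i - d3update N α q i v (i + 1) = 2 * r - d := by
    unfold d3update
    rw [if_pos rfl, if_neg hne, if_pos rfl, ← hr, hd]
    ring
  rw [heq, abs_le]
  rcases abs_cases d with ⟨h1, h2⟩ | ⟨h1, h2⟩ <;> rw [h1] <;> omega
end

section
/- Let N ≥ 1, L ∈ ℤ, and let q : Fin N → ℤ satisfy q_i ≥ 1 for all i and Σ_i q_i = L. Then Σ_i ((q_i : ℝ) − L/N)² ≤ (L − N)²·N/4. -/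
/-!
Comparing deviations from the mean with deviations from `1` gives
`∑ (qᵢ - 1)² = V(q) + N (L/N - 1)² = V(q) + M² / N` with `M = L - N`. The numbers `qᵢ - 1` are
nonnegative with sum `M`, so `∑ (qᵢ - 1)² ≤ M²`. Hence `V(q) ≤ M² (1 - 1/N) ≤ M² N / 4`, the last
step being `(N - 2)² ≥ 0`.
-/

open Finset

section MeanDeviation

variable {ι K : Type*} [Fintype ι] [Field K] [CharZero K]

lemma sum_sub_mean_eq_zero (f : ι → K) :
    ∑ i, (f i - (∑ j, f j) / Fintype.card ι) = 0 := by
  cases isEmpty_or_nonempty ι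
  · simp
  · rw [sum_sub_distrib, sum_const, card_univ, nsmul_eq_mul,
      mul_div_cancel₀ _ (Nat.cast_ne_zero.mpr Fintype.card_ne_zero), sub_self]

lemma sum_sub_sq_eq_sum_sub_mean_sq_add (f : ι → K) (c : K) :
    ∑ i, (f i - c) ^ 2 =
      ∑ i, (f i - (∑ j, f j) / Fintype.card ι) ^ 2 +
        Fintype.card ι * ((∑ j, f j) / Fintype.card ι - c) ^ 2 := by
  set m := (∑ j, f j) / Fintype.card ι
  have hsplit : ∀ i, (f i - c) ^ 2 = (f i - m) ^ 2 + 2 * (m - c) * (f i - m) + (m - c) ^ 2 :=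
    fun i ↦ by ring
  have hcentred : ∑ i, (f i - m) = 0 := sum_sub_mean_eq_zero f
  simp only [hsplit, sum_add_distrib, ← mul_sum, hcentred, sum_const, card_univ, nsmul_eq_mul,
    mul_zero, add_zero]

end MeanDeviation

lemma one_sub_inv_le_div_four {n : ℝ} (hn : 0 < n) : 1 - n⁻¹ ≤ n / 4 := by
  have hgap : n / 4 - (1 - n⁻¹) = (n - 2) ^ 2 / (4 * n) := by
    field_simp
    ring
  have : 0 ≤ (n - 2) ^ 2 / (4 * n) := by positivity
  linarith

/-- Bound on the Lyapunov function `V(q) = Σ_i (q_i − q̄)²` over all admissible states: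
entries are integers, at least 1, and sum to `L`. -/
theorem stmt10 (N : ℕ) (hN : 1 ≤ N) (L : ℤ) (q : Fin N → ℤ)
    (hq1 : ∀ i, 1 ≤ q i) (hsum : ∑ i, q i = L) :
    ∑ i, ((q i : ℝ) - (L : ℝ) / (N : ℝ)) ^ 2 ≤ ((L : ℝ) - (N : ℝ)) ^ 2 * (N : ℝ) / 4 := by
  have hNpos : (0 : ℝ) < N := by exact_mod_cast hN
  have hsumR : ∑ i, (q i : ℝ) = L := by exact_mod_cast hsum
  have hshift : ∑ i, ((q i : ℝ) - 1) = L - N := by simp [sum_sub_distrib, hsumR]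
  have hsq : ∑ i, ((q i : ℝ) - 1) ^ 2 ≤ ((L : ℝ) - N) ^ 2 := by
    rw [← hshift]
    exact sum_sq_le_sq_sum_of_nonneg fun i _ ↦ sub_nonneg.mpr (by exact_mod_cast hq1 i)
  have hdecomp := sum_sub_sq_eq_sum_sub_mean_sq_add (fun i ↦ (q i : ℝ)) 1
  simp only [hsumR, Fintype.card_fin] at hdecomp
  have hmean : (N : ℝ) * ((L : ℝ) / N - 1) ^ 2 = ((L : ℝ) - N) ^ 2 * (N : ℝ)⁻¹ := by
    field_simp
  calc ∑ i, ((q i : ℝ) - (L : ℝ) / (N : ℝ)) ^ 2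
      ≤ ((L : ℝ) - N) ^ 2 * (1 - (N : ℝ)⁻¹) := by linarith [hdecomp, hsq, hmean]
    _ ≤ ((L : ℝ) - (N : ℝ)) ^ 2 * (N / 4) := by
      gcongr; exact one_sub_inv_le_div_four hNpos
    _ = ((L : ℝ) - (N : ℝ)) ^ 2 * (N : ℝ) / 4 := by ring
end

section
/- Let N ≥ 2, α ∈ (0,1), and let q : ZMod N → ℤ with |q_i − q_{i+1}| ≤ 1 for some edge i. Then for every dither value v ∈ (−1/2, 1/2) and every real number c, the D³sync update at edge i with dither v satisfies Σ_j ((q'_j : ℝ) − c)² = Σ_j ((q_j : ℝ) − c)². (When the active nodes' values differ by at most one slot, the interaction leaves the Lyapunov function V unchanged.) -/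
open MeasureTheory

/-!
When `d = q_i − q_{i+1} ∈ {−1, 0, 1}`, the point `(1+α)/2 · d + v` differs by less than `1/2`
from `(1+α)/2 · d`, which lies strictly between `0` and `d` when `d ≠ 0`; so it rounds to `0`
or to `d`. The update then either swaps the two active values or leaves them in place: it
permutes the entries of `q`, and every sum `Σ_j f(q_j)` is unchanged.
-/

theorem nround_eq_round (y : ℝ) : nround y = round y := (round_eq y).symm

theorem round_mul_add_eq_zero_or_eq {t v : ℝ} (ht : t ∈ Set.Ioo 0 1) (hv : |v| < 1 / 2)
    {d : ℤ} (hd : |d| ≤ 1) : round (t * d + v) = 0 ∨ round (t * d + v) = d := by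
  obtain ⟨ht0, ht1⟩ := ht
  have hround := abs_sub_round (t * d + v)
  rw [abs_le] at hround
  rw [abs_lt] at hv
  rw [abs_le] at hd
  set k := round (t * d + v)
  rcases (by omega : d = -1 ∨ d = 0 ∨ d = 1) with rfl | rfl | rfl <;> push_cast at hround
  · have : -2 < k ∧ k < 1 := by constructor <;> (rify; linarith)
    omega
  · have : -1 < k ∧ k < 1 := by constructor <;> (rify; linarith)
    omega
  · have : -1 < k ∧ k < 2 := by constructor <;> (rify; linarith)
    omega

theorem d3update_eq_comp_swap_or_eq {N : ℕ} {α : ℝ} (hα : α ∈ Set.Ioo (-1 : ℝ) 1)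
    {q : ZMod N → ℤ} {i : ZMod N} (hdiff : |q i - q (i + 1)| ≤ 1) {v : ℝ}
    (hv : v ∈ Set.Ioo (-(1 : ℝ) / 2) (1 / 2)) :
    d3update N α q i v = q ∘ Equiv.swap i (i + 1) ∨ d3update N α q i v = q := by
  have ht : (1 + α) / 2 ∈ Set.Ioo (0 : ℝ) 1 := ⟨by linarith [hα.1], by linarith [hα.2]⟩
  have hv' : |v| < 1 / 2 := abs_lt.2 ⟨by linarith [hv.1], hv.2⟩
  have hcast : (q i : ℝ) - (q (i + 1) : ℝ) = ((q i - q (i + 1) : ℤ) : ℝ) := by push_cast; ring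
  unfold d3update
  rw [hcast, nround_eq_round]
  rcases round_mul_add_eq_zero_or_eq ht hv' hdiff with hswap | hkeep
  · left
    funext j
    rw [hswap]
    split_ifs with hi hi1
    · simp [hi]
    · simp [hi1]
    · simp [Equiv.swap_apply_of_ne_of_ne hi hi1]
  · right
    funext j
    rw [hkeep]
    split_ifs with hi hi1
    · rw [hi]; ring
    · rw [hi1]; ring
    · rfl

theorem stmt11_general (N : ℕ) [NeZero N] (α : ℝ) (hα : α ∈ Set.Ioo (0 : ℝ) 1)
    (q : ZMod N → ℤ) (i : ZMod N) (hdiff : |q i - q (i + 1)| ≤ 1) (v : ℝ)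
    (hv : v ∈ Set.Ioo (-(1 : ℝ) / 2) (1 / 2)) (c : ℝ) :
    ∑ j : ZMod N, ((d3update N α q i v j : ℝ) - c) ^ 2 =
      ∑ j : ZMod N, ((q j : ℝ) - c) ^ 2 := by
  rcases d3update_eq_comp_swap_or_eq ⟨by linarith [hα.1], hα.2⟩ hdiff hv with h | h <;>
    rw [h]
  exact Equiv.sum_comp (Equiv.swap i (i + 1)) fun j => ((q j : ℝ) - c) ^ 2

/-- When the active nodes' values differ by at most one slot, the D³sync interaction
leaves the Lyapunov function `V(q) = Σ_j (q_j − c)²` unchanged. -/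
theorem stmt11 (N : ℕ) [NeZero N] (hN : 2 ≤ N) (α : ℝ) (hα : α ∈ Set.Ioo (0 : ℝ) 1)
    (q : ZMod N → ℤ) (i : ZMod N) (hdiff : |q i - q (i + 1)| ≤ 1) (v : ℝ)
    (hv : v ∈ Set.Ioo (-(1 : ℝ) / 2) (1 / 2)) (c : ℝ) :
    ∑ j : ZMod N, ((d3update N α q i v j : ℝ) - c) ^ 2 =
      ∑ j : ZMod N, ((q j : ℝ) - c) ^ 2 :=
  stmt11_general N α hα q i hdiff v hv c
end

section
/- Let N ≥ 2 and let q, q' : Fin N → ℤ agree everywhere except at two distinct indices i, j, where q'_i = q_i − k and q'_j = q_j + k for some integer k. Suppose m = q_i − q_j satisfies m ≥ 2 and 1 ≤ k ≤ m − 1 (a compression). Then for every real number c, Σ_t ((q'_t : ℝ) − c)² ≤ Σ_t ((q_t : ℝ) − c)² − 2. (Every compression decreases the Lyapunov function V by at least 2.) -/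
/-- Every compression decreases the Lyapunov function `V(q) = Σ_t (q_t − c)²`
by at least 2. -/
theorem stmt12 (N : ℕ) (hN : 2 ≤ N) (q q' : Fin N → ℤ) (i j : Fin N) (hij : i ≠ j)
    (k : ℤ) (hqi : q' i = q i - k) (hqj : q' j = q j + k)
    (hother : ∀ t, t ≠ i → t ≠ j → q' t = q t)
    (hm : 2 ≤ q i - q j) (hk1 : 1 ≤ k) (hk2 : k ≤ q i - q j - 1) (c : ℝ) :
    ∑ t, ((q' t : ℝ) - c) ^ 2 ≤ (∑ t, ((q t : ℝ) - c) ^ 2) - 2 := by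
  have hsum : ∑ t, ((((q' t : ℝ)) - c) ^ 2 - (((q t : ℝ)) - c) ^ 2)
      = ((((q' i : ℝ)) - c) ^ 2 - (((q i : ℝ)) - c) ^ 2)
        + ((((q' j : ℝ)) - c) ^ 2 - (((q j : ℝ)) - c) ^ 2) := by
    apply Finset.sum_eq_add_of_mem i j (Finset.mem_univ i) (Finset.mem_univ j) hij
    intro t _ ht
    obtain ⟨hti, htj⟩ := ht
    rw [hother t hti htj]
    ring
  rw [Finset.sum_sub_distrib] at hsum
  have hk1' : (1 : ℝ) ≤ (k : ℝ) := by exact_mod_cast hk1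
  have hk2' : (k : ℝ) ≤ ((q i : ℝ) - (q j : ℝ)) - 1 := by
    have : ((k : ℤ) : ℝ) ≤ ((q i - q j - 1 : ℤ) : ℝ) := by exact_mod_cast hk2
    push_cast at this; linarith
  have hqi' : ((q' i : ℝ)) = (q i : ℝ) - (k : ℝ) := by exact_mod_cast hqi
  have hqj' : ((q' j : ℝ)) = (q j : ℝ) + (k : ℝ) := by exact_mod_cast hqj
  rw [hqi', hqj'] at hsum
  nlinarith [hsum, sq_nonneg ((k:ℝ) - 1), sq_nonneg ((q i : ℝ) - (q j : ℝ) - (k:ℝ) - 1)]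
end

section
/- Let x ∈ ℝ, let j = ⌊x⌋, and let p = x − j be its fractional part. Then the Lebesgue measure of { v ∈ (−1/2, 1/2) : round(x + v) = j } equals 1 − p, the Lebesgue measure of { v ∈ (−1/2, 1/2) : round(x + v) = j + 1 } equals p, and for every integer m ∉ {j, j+1} the Lebesgue measure of { v ∈ (−1/2, 1/2) : round(x + v) = m } equals 0. (This is the distribution of the dithered quantizer with uniform dither.) -/
open MeasureTheory

lemma nround_eq_iff (y : ℝ) (m : ℤ) :
    nround y = m ↔ (m : ℝ) ≤ y + 1/2 ∧ y + 1/2 < m + 1 := by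
  unfold nround
  exact Int.floor_eq_iff

/-- The distribution of the dithered quantizer with uniform dither on `(−1/2, 1/2)`:
`Q(x) = ⌊x⌋` with probability `1 − p`, `Q(x) = ⌊x⌋ + 1` with probability `p`, where
`p` is the fractional part of `x`, and any other value has probability zero. -/
theorem stmt13 (x : ℝ) (j : ℤ) (hj : j = ⌊x⌋) (p : ℝ) (hp : p = x - (j : ℝ)) :
    volume {v : ℝ | v ∈ Set.Ioo (-(1 : ℝ) / 2) (1 / 2) ∧ nround (x + v) = j} =
      ENNReal.ofReal (1 - p) ∧
    volume {v : ℝ | v ∈ Set.Ioo (-(1 : ℝ) / 2) (1 / 2) ∧ nround (x + v) = j + 1} =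
      ENNReal.ofReal p ∧
    ∀ m : ℤ, m ≠ j → m ≠ j + 1 →
      volume {v : ℝ | v ∈ Set.Ioo (-(1 : ℝ) / 2) (1 / 2) ∧ nround (x + v) = m} = 0 := by
  have hp0 : 0 ≤ p := by
    rw [hp, hj]; have := Int.floor_le x; linarith
  have hp1 : p < 1 := by
    rw [hp, hj]; have := Int.lt_floor_add_one x; linarith
  refine ⟨?_, ?_, ?_⟩
  · have hset : {v : ℝ | v ∈ Set.Ioo (-(1 : ℝ) / 2) (1 / 2) ∧ nround (x + v) = j}
        = Set.Ioo (-(1 : ℝ) / 2) (1/2 - p) := by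
      ext v
      simp only [Set.mem_setOf_eq, Set.mem_Ioo, nround_eq_iff]
      constructor
      · rintro ⟨⟨h1, h2⟩, h3, h4⟩
        constructor
        · exact h1
        · have : (j : ℝ) = x - p := by rw [hp]; ring
          rw [this] at h4; linarith
      · rintro ⟨h1, h2⟩
        have hj' : (j : ℝ) = x - p := by rw [hp]; ring
        refine ⟨⟨h1, by linarith⟩, ?_, ?_⟩ <;> rw [hj'] <;> linarith
    rw [hset, Real.volume_Ioo]
    congr 1; ring
  · have hset : {v : ℝ | v ∈ Set.Ioo (-(1 : ℝ) / 2) (1 / 2) ∧ nround (x + v) = j + 1}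
        = Set.Ico (1/2 - p) (1/2 : ℝ) := by
      ext v
      simp only [Set.mem_setOf_eq, Set.mem_Ioo, Set.mem_Ico, nround_eq_iff]
      have hj' : (j : ℝ) = x - p := by rw [hp]; ring
      push_cast
      constructor
      · rintro ⟨⟨h1, h2⟩, h3, h4⟩
        rw [hj'] at h3
        exact ⟨by linarith, h2⟩
      · rintro ⟨h1, h2⟩
        refine ⟨⟨by linarith, h2⟩, ?_, ?_⟩ <;> rw [hj'] <;> linarith
    rw [hset, Real.volume_Ico]
    congr 1; ring
  · intro m hm1 hm2
    have hset : {v : ℝ | v ∈ Set.Ioo (-(1 : ℝ) / 2) (1 / 2) ∧ nround (x + v) = m}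
        = (∅ : Set ℝ) := by
      ext v
      simp only [Set.mem_setOf_eq, Set.mem_Ioo, Set.mem_empty_iff_false, iff_false]
      rintro ⟨⟨h1, h2⟩, h3⟩
      rw [nround_eq_iff] at h3
      obtain ⟨h4, h5⟩ := h3
      have hj' : (j : ℝ) = x - p := by rw [hp]; ring
      rcases lt_or_gt_of_ne hm1 with hlt | hgt
      · -- m ≤ j - 1
        have : m ≤ j - 1 := by omega
        have : (m : ℝ) ≤ (j : ℝ) - 1 := by exact_mod_cast this
        rw [hj'] at this
        linarith
      · -- m ≥ j + 2
        have : j + 2 ≤ m := by omega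
        have : (j : ℝ) + 2 ≤ (m : ℝ) := by exact_mod_cast this
        rw [hj'] at this
        linarith
    rw [hset]; simp
end

section
/- Let N ≥ 2, α ∈ (0,1), and let q : ZMod N → ℤ. Then for every edge i and every dither value v ∈ (−1/2, 1/2), the D³sync update at edge i with dither v does not increase the range: (max_j q'_j) − (min_j q'_j) ≤ (max_j q_j) − (min_j q_j). -/
open MeasureTheory

lemma nround_ge (α v : ℝ) (hα0 : 0 < α) (hα1 : α < 1) (hv1 : -(1:ℝ)/2 < v)
    (d : ℤ) : min 0 d ≤ nround ((1 + α) / 2 * (d : ℝ) + v) := by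
  rw [nround, Int.le_floor]
  rcases le_or_gt 0 d with hd | hd
  · have hd' : (0:ℝ) ≤ (d:ℝ) := by exact_mod_cast hd
    rw [min_eq_left hd]
    push_cast
    nlinarith
  · have hd' : (d:ℝ) ≤ 0 := by exact_mod_cast hd.le
    rw [min_eq_right hd.le]
    push_cast
    nlinarith [mul_nonneg (by linarith : (0:ℝ) ≤ 1 - α) (by linarith : (0:ℝ) ≤ -(d:ℝ))]

lemma nround_le (α v : ℝ) (hα0 : 0 < α) (hα1 : α < 1) (hv2 : v < 1/2)
    (d : ℤ) : nround ((1 + α) / 2 * (d : ℝ) + v) ≤ max 0 d := by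
  rw [nround, ← Int.lt_add_one_iff, Int.floor_lt]
  rcases le_or_gt 0 d with hd | hd
  · have hd' : (0:ℝ) ≤ (d:ℝ) := by exact_mod_cast hd
    rw [max_eq_right hd]
    push_cast
    nlinarith
  · have hd' : (d:ℝ) ≤ 0 := by exact_mod_cast hd.le
    rw [max_eq_left hd.le]
    push_cast
    nlinarith

/-- The D³sync update does not increase the range `max − min` of the state. -/
theorem stmt15 (N : ℕ) [NeZero N] (hN : 2 ≤ N) (α : ℝ) (hα : α ∈ Set.Ioo (0 : ℝ) 1)
    (q : ZMod N → ℤ) (i : ZMod N) (v : ℝ)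
    (hv : v ∈ Set.Ioo (-(1 : ℝ) / 2) (1 / 2)) :
    Finset.univ.sup' Finset.univ_nonempty (d3update N α q i v) -
        Finset.univ.inf' Finset.univ_nonempty (d3update N α q i v) ≤
      Finset.univ.sup' Finset.univ_nonempty q -
        Finset.univ.inf' Finset.univ_nonempty q := by
  obtain ⟨hα0, hα1⟩ := hα
  obtain ⟨hv1, hv2⟩ := hv
  set d : ℤ := q i - q (i + 1) with hd
  have hcast : ((q i : ℝ) - (q (i + 1) : ℝ)) = (d : ℝ) := by push_cast [hd]; ring
  set r : ℤ := nround ((1 + α) / 2 * ((q i : ℝ) - (q (i + 1) : ℝ)) + v) with hr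
  have hrge : min 0 d ≤ r := by rw [hr, hcast]; exact nround_ge α v hα0 hα1 hv1 d
  have hrle : r ≤ max 0 d := by rw [hr, hcast]; exact nround_le α v hα0 hα1 hv2 d
  set M := Finset.univ.sup' Finset.univ_nonempty q with hM
  set m := Finset.univ.inf' Finset.univ_nonempty q with hm
  have hqM : ∀ j, q j ≤ M := fun j => Finset.le_sup' q (Finset.mem_univ j)
  have hqm : ∀ j, m ≤ q j := fun j => Finset.inf'_le q (Finset.mem_univ j)
  have hub : ∀ j, d3update N α q i v j ≤ M := by
    intro j
    unfold d3update
    split_ifs with h1 h2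
    · rcases le_total 0 d with h | h
      · have := max_eq_right h ▸ hrle
        have := hqM i
        omega
      · have := max_eq_left h ▸ hrle
        have := hqM (i + 1)
        omega
    · rcases le_total 0 d with h | h
      · have := min_eq_left h ▸ hrge
        have := hqM i
        omega
      · have := min_eq_right h ▸ hrge
        have := hqM (i + 1)
        omega
    · exact hqM j
  have hlb : ∀ j, m ≤ d3update N α q i v j := by
    intro j
    unfold d3update
    split_ifs with h1 h2
    · rcases le_total 0 d with h | h
      · have := min_eq_left h ▸ hrge
        have := hqm (i + 1)
        omega
      · have := min_eq_right h ▸ hrge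
        have := hqm i
        omega
    · rcases le_total 0 d with h | h
      · have := max_eq_right h ▸ hrle
        have := hqm (i + 1)
        omega
      · have := max_eq_left h ▸ hrle
        have := hqm i
        omega
    · exact hqm j
  have h1 : Finset.univ.sup' Finset.univ_nonempty (d3update N α q i v) ≤ M :=
    Finset.sup'_le _ _ fun j _ => hub j
  have h2 : m ≤ Finset.univ.inf' Finset.univ_nonempty (d3update N α q i v) :=
    Finset.le_inf' _ _ fun j _ => hlb j
  omega
end

section
/- Let N ≥ 2, α ∈ (0,1), and let q : ZMod N → ℤ. Then for every edge i and every dither value v ∈ (−1/2, 1/2), the D³sync update at edge i with dither v keeps the updated active pair within the interval spanned by the old pair: min(q_i, q_{i+1}) ≤ q'_i ≤ max(q_i, q_{i+1}) and min(q_i, q_{i+1}) ≤ q'_{i+1} ≤ max(q_i, q_{i+1}). In particular, if q_j ≥ 1 for all j, then q'_j ≥ 1 for all j (the firing order of the nodes is preserved). -/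
open MeasureTheory

/-- The D³sync update keeps the updated active pair inside the interval spanned by the
old pair; in particular, positivity of all entries is preserved (the firing order of
the nodes is preserved). -/
theorem stmt16 (N : ℕ) (hN : 2 ≤ N) (α : ℝ) (hα : α ∈ Set.Ioo (0 : ℝ) 1)
    (q : ZMod N → ℤ) (i : ZMod N) (v : ℝ)
    (hv : v ∈ Set.Ioo (-(1 : ℝ) / 2) (1 / 2)) :
    (min (q i) (q (i + 1)) ≤ d3update N α q i v i ∧
      d3update N α q i v i ≤ max (q i) (q (i + 1))) ∧
    (min (q i) (q (i + 1)) ≤ d3update N α q i v (i + 1) ∧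
      d3update N α q i v (i + 1) ≤ max (q i) (q (i + 1))) ∧
    ((∀ j, 1 ≤ q j) → ∀ j, 1 ≤ d3update N α q i v j) := by
  obtain ⟨hα0, hα1⟩ := hα
  obtain ⟨hv1, hv2⟩ := hv
  haveI : Fact (1 < N) := ⟨hN⟩
  have hne : i + 1 ≠ i := by
    intro h
    have : (1 : ZMod N) = 0 := by
      have := congrArg (fun x => x - i) h
      simpa using this
    exact one_ne_zero this
  set r : ℤ := nround ((1 + α) / 2 * ((q i : ℝ) - (q (i + 1) : ℝ)) + v) with hr
  have hrb : min 0 (q i - q (i + 1)) ≤ r ∧ r ≤ max 0 (q i - q (i + 1)) := by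
    set d : ℤ := q i - q (i + 1) with hd
    have hcast : ((q i : ℝ) - (q (i + 1) : ℝ)) = (d : ℝ) := by push_cast [hd]; ring
    rw [hr, hcast]
    unfold nround
    rcases le_or_gt 0 d with h | h
    · have hdr : (0 : ℝ) ≤ (d : ℝ) := by exact_mod_cast h
      constructor
      · refine le_trans (min_le_left _ _) (Int.le_floor.mpr ?_)
        push_cast; nlinarith
      · refine le_trans (Int.le_of_lt_add_one (Int.floor_lt.mpr ?_)) (le_max_right _ _)
        push_cast; nlinarith
    · have hdr : (d : ℝ) < 0 := by exact_mod_cast h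
      constructor
      · refine le_trans (min_le_right _ _) (Int.le_floor.mpr ?_)
        push_cast; nlinarith
      · refine le_trans (Int.le_of_lt_add_one (Int.floor_lt.mpr ?_)) (le_max_left _ _)
        push_cast; nlinarith
  obtain ⟨hr1, hr2⟩ := hrb
  have hui : d3update N α q i v i = q (i + 1) + r := by simp [d3update, hr]
  have hus : d3update N α q i v (i + 1) = q i - r := by
    simp only [d3update, if_neg hne, ← hr, if_true, eq_self_iff_true]; ring
  have h1 : min (q i) (q (i + 1)) ≤ q (i + 1) + r ∧
      q (i + 1) + r ≤ max (q i) (q (i + 1)) := by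
    constructor <;> rcases le_total (q i) (q (i + 1)) with h | h <;> simp [min, max] <;> omega
  have h2 : min (q i) (q (i + 1)) ≤ q i - r ∧ q i - r ≤ max (q i) (q (i + 1)) := by
    constructor <;> rcases le_total (q i) (q (i + 1)) with h | h <;> simp [min, max] <;> omega
  refine ⟨by rw [hui]; exact h1, by rw [hus]; exact h2, ?_⟩
  intro hq j
  have hmin : (1 : ℤ) ≤ min (q i) (q (i + 1)) := le_min (hq i) (hq (i + 1))
  by_cases hj : j = i
  · rw [hj, hui]; exact le_trans hmin h1.1
  · by_cases hj' : j = i + 1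
    · rw [hj', hus]; exact le_trans hmin h2.1
    · simp only [d3update, if_neg hj, if_neg hj']; exact hq j
end
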